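/- The six elements x_1, x_2, x_3, z_1², z_2², z_3² of R are algebraically independent over K, and R^H is a free module of rank two over the subalgebra P := K[x_1, x_2, x_3, z_1², z_2², z_3²] with basis {1, z_1z_2z_3}; that is, R^H = P ⊕ P·z_1z_2z_3. -/

import Mathlib

noncomputable section

open MvPolynomial

/-- The set of two-element subsets of `{1,2,3,4}` (modelled as non-diagonal unordered
pairs of elements of `Fin 4`), indexing the variables of the polynomial ring `R`. -/
abbrev PairIdx : Type := {p : Sym2 (Fin 4) // ¬ p.IsDiag}

/-- The two-element subset `{i, j}`. -/
def pr (i j : Fin 4) (h : i ≠ j) : PairIdx := ⟨s(i, j), by simp [Sym2.mk_isDiag_iff, h]⟩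

/-- The permutation of two-element subsets induced by a permutation `σ` of `{1,2,3,4}`. -/
def pairPerm (σ : Equiv.Perm (Fin 4)) : Equiv.Perm PairIdx :=
  Equiv.subtypeEquiv
    { toFun := Sym2.map σ
      invFun := Sym2.map σ.symm
      left_inv := fun p => by
        rw [show Sym2.map σ.symm (Sym2.map σ p) = Sym2.map (σ.symm ∘ σ) p by
          rw [Sym2.map_comp]; rfl]
        simp
      right_inv := fun p => by
        rw [show Sym2.map σ (Sym2.map σ.symm p) = Sym2.map (σ ∘ σ.symm) p by
          rw [Sym2.map_comp]; rfl]
        simp }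
    (fun p => not_congr (Sym2.isDiag_map σ.injective).symm)

variable (K : Type*) [Field K]

/-- `R := K[x_{{i,j}}]`, the six-variable polynomial ring on the variables indexed by
the two-element subsets of `{1,2,3,4}`. -/
abbrev R4 : Type _ := MvPolynomial PairIdx K

/-- The action of `σ ∈ S₄` on `R`, `σ · x_{{i,j}} = x_{{σ(i),σ(j)}}`, as a `K`-algebra
homomorphism. -/
def actS4 (σ : Equiv.Perm (Fin 4)) : R4 K →ₐ[K] R4 K := rename (pairPerm σ)

/-- The invariant subalgebra `R^{S₄}`. -/
def S4Inv : Subalgebra K (R4 K) :=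
  ⨅ σ : Equiv.Perm (Fin 4), AlgHom.equalizer (actS4 K σ) (AlgHom.id K (R4 K))

/-- `x₁ = x_{{1,2}} + x_{{3,4}}`, `x₂ = x_{{1,3}} + x_{{2,4}}`, `x₃ = x_{{1,4}} + x_{{2,3}}`
(vertices renamed `1,2,3,4 → 0,1,2,3`). -/
def xg : Fin 3 → R4 K :=
  ![X (pr 0 1 (by decide)) + X (pr 2 3 (by decide)),
    X (pr 0 2 (by decide)) + X (pr 1 3 (by decide)),
    X (pr 0 3 (by decide)) + X (pr 1 2 (by decide))]

/-- `z₁ = x_{{1,2}} − x_{{3,4}}`, `z₂ = x_{{1,3}} − x_{{2,4}}`, `z₃ = x_{{1,4}} − x_{{2,3}}`. -/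
def zg : Fin 3 → R4 K :=
  ![X (pr 0 1 (by decide)) - X (pr 2 3 (by decide)),
    X (pr 0 2 (by decide)) - X (pr 1 3 (by decide)),
    X (pr 0 3 (by decide)) - X (pr 1 2 (by decide))]

/-- `[x^a z^{2b}] := Σ_{i=1}^{3} x_i^a z_i^{2b}`. -/
def pSum (a b : ℕ) : R4 K := ∑ i : Fin 3, xg K i ^ a * zg K i ^ (2 * b)

/-- The Klein four subgroup `H = {id, (12)(34), (13)(24), (14)(23)}` of `S₄`
(vertices renamed `1,2,3,4 → 0,1,2,3`). -/
def klein : Set (Equiv.Perm (Fin 4)) :=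
  {1, Equiv.swap 0 1 * Equiv.swap 2 3, Equiv.swap 0 2 * Equiv.swap 1 3,
    Equiv.swap 0 3 * Equiv.swap 1 2}

/-- The subalgebra `R^H` of `H`-invariants. -/
def HInv : Subalgebra K (R4 K) :=
  ⨅ σ ∈ klein, AlgHom.equalizer (actS4 K σ) (AlgHom.id K (R4 K))

/-!
Since `2` is invertible, `x_j, z_j` are coordinates on `R`. In them, each `σ ∈ H \ {1}` fixes
the `x_j` and negates exactly two of the `z_j`. So a monomial of an `H`-invariant polynomial has
`z`-exponents that are either all even, when it lies in `P = K[x_j, z_j²]`, or all odd, when it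
lies in `P·z₁z₂z₃`; monomials of the two kinds cannot cancel, which gives uniqueness. The
`x_j, z_j²` are algebraically independent because `R` is integral over the algebra they generate
and has transcendence degree `6`.
-/

theorem Finsupp.prod_ite_neg_one_pow {σ M : Type*} [CommMonoid M] [HasDistribNeg M]
    [DecidableEq σ] (s : Finset σ) (d : σ →₀ ℕ) :
    (d.prod fun i k => (if i ∈ s then -1 else 1 : M) ^ k) = (-1) ^ ∑ i ∈ s, d i := by
  simp_rw [Finsupp.prod, ite_pow, one_pow, Finset.prod_ite_mem, Finset.prod_pow_eq_pow_sum]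
  congr 1
  refine Finset.sum_subset Finset.inter_subset_right fun i hs hi => ?_
  simpa [hs] using hi

theorem Nat.forall_even_or_forall_odd_of_even_add {ι : Type*} {f : ι → ℕ}
    (h : ∀ i j, i ≠ j → Even (f i + f j)) : (∀ i, Even (f i)) ∨ ∀ i, Odd (f i) := by
  have hiff (i j : ι) : Even (f i) ↔ Even (f j) := by
    obtain rfl | hij := eq_or_ne i j
    · rfl
    · exact Nat.even_add.mp (h i j hij)
  by_cases hex : ∃ i, Even (f i)
  · obtain ⟨i, hi⟩ := hex
    exact .inl fun j => (hiff i j).mp hi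
  · push Not at hex
    exact .inr fun j => Nat.not_even_iff_odd.mp (hex j)

namespace MvPolynomial

variable {R σ : Type*}

theorem mem_adjoin_range_X_pow_iff [CommSemiring R] (n : σ → ℕ) {p : MvPolynomial σ R} :
    p ∈ Algebra.adjoin R (Set.range fun i => X i ^ n i) ↔
      ∀ d ∈ p.support, ∀ i, n i ∣ d i := by
  classical
  constructor
  · intro hp
    induction hp using Algebra.adjoin_induction with
    | mem x hx =>
      obtain ⟨i, rfl⟩ := hx
      intro d hd j
      simp only [X_pow_eq_monomial] at hd
      rw [Finset.mem_singleton.mp (support_monomial_subset hd), Finsupp.single_apply]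
      split_ifs with h
      · exact h ▸ dvd_rfl
      · exact dvd_zero _
    | algebraMap r =>
      intro d hd i
      rw [algebraMap_eq, C_apply] at hd
      rw [Finset.mem_singleton.mp (support_monomial_subset hd)]
      exact dvd_zero _
    | add x y _ _ hx hy =>
      intro d hd
      rcases Finset.mem_union.mp (support_add hd) with h | h
      exacts [hx d h, hy d h]
    | mul x y _ _ hx hy =>
      intro d hd i
      obtain ⟨a, ha, b, hb, rfl⟩ := Finset.mem_add.mp (support_mul x y hd)
      exact dvd_add (hx a ha i) (hy b hb i)
  · intro hp
    rw [p.as_sum]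
    refine Subalgebra.sum_mem _ fun d hd => ?_
    rw [monomial_eq, Finsupp.prod]
    refine Subalgebra.mul_mem _ (Subalgebra.algebraMap_mem _ _)
      (Subalgebra.prod_mem _ fun i _ => ?_)
    obtain ⟨k, hk⟩ := hp d hd i
    rw [hk, pow_mul]
    exact Subalgebra.pow_mem _ (Algebra.subset_adjoin (Set.mem_range_self i)) _

theorem algebraicIndependent_X_pow [CommRing R] [IsDomain R] [Finite σ] {n : σ → ℕ}
    (hn : ∀ i, n i ≠ 0) : AlgebraicIndependent R fun i => (X i : MvPolynomial σ R) ^ n i := by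
  set S := Algebra.adjoin R (Set.range fun i => (X i : MvPolynomial σ R) ^ n i)
  have hX (i : σ) : IsIntegral S (X i : MvPolynomial σ R) := by
    have hmem : X i ^ n i ∈ S := Algebra.subset_adjoin ⟨i, rfl⟩
    exact .of_pow (Nat.pos_of_ne_zero (hn i))
      (isIntegral_algebraMap (R := S) (x := ⟨_, hmem⟩))
  have : Algebra.IsIntegral S (MvPolynomial σ R) := by
    rw [← integralClosure_eq_top_iff, eq_top_iff]
    have hle : Algebra.adjoin R (Set.range X) ≤
        (integralClosure S (MvPolynomial σ R)).restrictScalars R :=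
      Algebra.adjoin_le (Set.range_subset_iff.mpr hX)
    exact fun p _ => hle (adjoin_range_X (R := R) ▸ Algebra.mem_top)
  refine (Algebra.IsAlgebraic.isTranscendenceBasis_of_lift_le_trdeg_of_finite R
    (fun i => (X i : MvPolynomial σ R) ^ n i) ?_).1
  simp [MvPolynomial.trdeg_of_isDomain]

section Scaling

variable [CommSemiring R]

def scaleVars (ε : σ → R) : MvPolynomial σ R →ₐ[R] MvPolynomial σ R :=
  aeval fun i => C (ε i) * X i

@[simp] theorem scaleVars_X (ε : σ → R) (i : σ) : scaleVars ε (X i) = C (ε i) * X i :=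
  aeval_X _ _

theorem scaleVars_monomial (ε : σ → R) (d : σ →₀ ℕ) (c : R) :
    scaleVars ε (monomial d c) = monomial d ((d.prod fun i k => ε i ^ k) * c) := by
  rw [scaleVars, aeval_monomial, monomial_eq, algebraMap_eq]
  simp_rw [mul_pow, ← C_pow, Finsupp.prod_mul, ← map_finsuppProd, C_mul]
  ring

theorem coeff_scaleVars (ε : σ → R) (d : σ →₀ ℕ) (p : MvPolynomial σ R) :
    coeff d (scaleVars ε p) = (d.prod fun i k => ε i ^ k) * coeff d p := by
  classical
  induction p using MvPolynomial.induction_on' with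
  | monomial e c =>
    rw [scaleVars_monomial, coeff_monomial, coeff_monomial]
    split_ifs with h
    · rw [h]
    · rw [mul_zero]
  | add p q hp hq => rw [map_add, coeff_add, coeff_add, hp, hq, mul_add]

end Scaling

section Signs

variable [CommRing R] [DecidableEq σ]

abbrev flipSigns (s : Finset σ) : MvPolynomial σ R →ₐ[R] MvPolynomial σ R :=
  scaleVars fun i => if i ∈ s then -1 else 1

theorem even_sum_of_flipSigns_eq [NoZeroDivisors R] (h2 : (2 : R) ≠ 0) {s : Finset σ}
    {p : MvPolynomial σ R} (hp : flipSigns s p = p) {d : σ →₀ ℕ} (hd : d ∈ p.support) :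
    Even (∑ i ∈ s, d i) := by
  have h := coeff_scaleVars (fun i => if i ∈ s then (-1 : R) else 1) d p
  rw [hp, Finsupp.prod_ite_neg_one_pow] at h
  by_contra hodd
  rw [(Nat.not_even_iff_odd.mp hodd).neg_one_pow] at h
  have h2p : 2 * coeff d p = 0 := by linear_combination h
  exact mem_support_iff.mp hd ((mul_eq_zero.mp h2p).resolve_left h2)

end Signs

section EvenInZ

open Sum

variable (R) [CommSemiring R] (ι κ : Type*)

/-- `R[x_i, z_j²]`, where `x_i = X (inl i)` and `z_j = X (inr j)`. -/
abbrev evenZSubalgebra : Subalgebra R (MvPolynomial (ι ⊕ κ) R) :=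
  Algebra.adjoin R (Set.range fun i => X i ^ Sum.elim (fun _ => 1) (fun _ => 2) i)

variable {R ι κ}

theorem mem_evenZSubalgebra_iff {p : MvPolynomial (ι ⊕ κ) R} :
    p ∈ evenZSubalgebra R ι κ ↔ ∀ d ∈ p.support, ∀ j, Even (d (inr j)) := by
  simp only [evenZSubalgebra, mem_adjoin_range_X_pow_iff, Sum.forall, Sum.elim_inl,
    Sum.elim_inr, isUnit_one, IsUnit.dvd, implies_true, true_and, even_iff_two_dvd]

theorem monomial_mem_evenZSubalgebra {d : ι ⊕ κ →₀ ℕ} (hd : ∀ j, Even (d (inr j)))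
    (c : R) :
    monomial d c ∈ evenZSubalgebra R ι κ := by
  classical
  refine mem_evenZSubalgebra_iff.mpr fun e he => ?_
  rwa [Finset.mem_singleton.mp (support_monomial_subset he)]

variable [Fintype κ]

def zOnes : ι ⊕ κ →₀ ℕ := ∑ j, Finsupp.single (inr j) 1

@[simp] theorem zOnes_inl (i : ι) : (zOnes : ι ⊕ κ →₀ ℕ) (inl i) = 0 := by
  simp [zOnes]

@[simp] theorem zOnes_inr (j : κ) : (zOnes : ι ⊕ κ →₀ ℕ) (inr j) = 1 := by
  classical
  simp [zOnes, Finsupp.single_apply]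

theorem monomial_zOnes : (monomial zOnes 1 : MvPolynomial (ι ⊕ κ) R) = ∏ j, X (inr j) := by
  rw [zOnes, monomial_sum_one]
  rfl

theorem monomial_eq_mul_prod_X_inr {d : ι ⊕ κ →₀ ℕ} (hd : ∀ j, Odd (d (inr j)))
    (c : R) :
    monomial d c = monomial (d - zOnes) c * ∏ j, X (inr j) := by
  have hle : zOnes ≤ d := fun
    | inl i => by simp
    | inr j => by simpa using Nat.succ_le_of_lt (hd j).pos
  rw [← monomial_zOnes, monomial_mul, mul_one, tsub_add_cancel_of_le hle]

theorem exists_eq_add_mul_prod_X_inr {g : MvPolynomial (ι ⊕ κ) R}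
    (hg : ∀ d ∈ g.support, (∀ j, Even (d (inr j))) ∨ ∀ j, Odd (d (inr j))) :
    ∃ p ∈ evenZSubalgebra R ι κ, ∃ q ∈ evenZSubalgebra R ι κ,
      g = p + q * ∏ j, X (inr j) := by
  rw [g.as_sum]
  refine Finset.sum_induction _ (fun f => ∃ p ∈ evenZSubalgebra R ι κ,
      ∃ q ∈ evenZSubalgebra R ι κ, f = p + q * ∏ j, X (inr j))
    ?_ ⟨0, zero_mem _, 0, zero_mem _, by simp⟩ ?_
  · rintro _ _ ⟨p, hp, q, hq, rfl⟩ ⟨p', hp', q', hq', rfl⟩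
    exact ⟨p + p', add_mem hp hp', q + q', add_mem hq hq', by ring⟩
  · intro d hd
    rcases hg d hd with heven | hodd
    · exact ⟨monomial d (coeff d g), monomial_mem_evenZSubalgebra heven _, 0, zero_mem _,
        by rw [zero_mul, add_zero]⟩
    · refine ⟨0, zero_mem _, monomial (d - zOnes) (coeff d g),
        monomial_mem_evenZSubalgebra (fun j => ?_) _,
        by rw [zero_add, monomial_eq_mul_prod_X_inr hodd]⟩
      obtain ⟨k, hk⟩ := hodd j
      rw [Finsupp.tsub_apply, zOnes_inr, hk, Nat.add_sub_cancel]
      exact even_two_mul k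

theorem eq_zero_of_add_mul_prod_X_inr_eq_zero [Nonempty κ] {p q : MvPolynomial (ι ⊕ κ) R}
    (hp : p ∈ evenZSubalgebra R ι κ) (hq : q ∈ evenZSubalgebra R ι κ)
    (h : p + q * ∏ j, X (inr j) = 0) : p = 0 ∧ q = 0 := by
  classical
  obtain ⟨j⟩ := ‹Nonempty κ›
  rw [← monomial_zOnes] at h
  -- a monomial of `p` is even in `z_j`, a monomial of `q * z_1 ⋯ z_n` is odd in `z_j`
  have hdisj (e : ι ⊕ κ →₀ ℕ) : coeff e p = 0 ∨ coeff e (q * monomial zOnes 1) = 0 := by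
    rw [or_iff_not_imp_left, coeff_mul_monomial', mul_one]
    intro hpe
    split_ifs with hle
    · by_contra hqe
      have hp_even := mem_evenZSubalgebra_iff.mp hp e (mem_support_iff.mpr hpe) j
      have hq_even := mem_evenZSubalgebra_iff.mp hq _ (mem_support_iff.mpr hqe) j
      rw [Finsupp.tsub_apply, zOnes_inr, Nat.even_sub (by simpa using hle (inr j))]
        at hq_even
      exact Nat.not_even_one (hq_even.mp hp_even)
    · rfl
  have hsum (e : ι ⊕ κ →₀ ℕ) : coeff e p + coeff e (q * monomial zOnes 1) = 0 := by
    rw [← coeff_add, h, coeff_zero]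
  have hp0 (e : ι ⊕ κ →₀ ℕ) : coeff e p = 0 := by
    rcases hdisj e with h' | h'
    · exact h'
    · simpa [h'] using hsum e
  have hqw (e : ι ⊕ κ →₀ ℕ) : coeff e (q * monomial zOnes 1) = 0 := by
    simpa [hp0 e] using hsum e
  refine ⟨ext _ _ hp0, ext _ _ fun d => ?_⟩
  rw [← mul_one (coeff d q), ← coeff_mul_monomial]
  exact hqw (d + zOnes)

end EvenInZ

end MvPolynomial

section Coordinates

open Sum

theorem pr_comm (i j : Fin 4) (h : i ≠ j) : pr i j h = pr j i h.symm :=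
  Subtype.ext Sym2.eq_swap

theorem pairPerm_pr (σ : Equiv.Perm (Fin 4)) {i j : Fin 4} (h : i ≠ j) :
    pairPerm σ (pr i j h) = pr (σ i) (σ j) (σ.injective.ne h) :=
  rfl

theorem PairIdx.eq_pr_cases (p : PairIdx) :
    p = pr 0 1 (by decide) ∨ p = pr 2 3 (by decide) ∨ p = pr 0 2 (by decide) ∨
    p = pr 1 3 (by decide) ∨ p = pr 0 3 (by decide) ∨ p = pr 1 2 (by decide) := by
  revert p; decide

def xzHom : MvPolynomial (Fin 3 ⊕ Fin 3) K →ₐ[K] R4 K := aeval (Sum.elim (xg K) (zg K))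

def xzInv : R4 K →ₐ[K] MvPolynomial (Fin 3 ⊕ Fin 3) K := aeval fun p =>
  if p = pr 0 1 (by decide) then C 2⁻¹ * (X (inl 0) + X (inr 0))
  else if p = pr 2 3 (by decide) then C 2⁻¹ * (X (inl 0) - X (inr 0))
  else if p = pr 0 2 (by decide) then C 2⁻¹ * (X (inl 1) + X (inr 1))
  else if p = pr 1 3 (by decide) then C 2⁻¹ * (X (inl 1) - X (inr 1))
  else if p = pr 0 3 (by decide) then C 2⁻¹ * (X (inl 2) + X (inr 2))
  else C 2⁻¹ * (X (inl 2) - X (inr 2))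

variable {K}

theorem C_inv_two_mul_two {σ : Type*} (h2 : (2 : K) ≠ 0) :
    (C 2⁻¹ : MvPolynomial σ K) * 2 = 1 := by
  rw [← map_ofNat C 2, ← C_mul, inv_mul_cancel₀ h2, C_1]

theorem xzHom_comp_xzInv (h2 : (2 : K) ≠ 0) :
    (xzHom K).comp (xzInv K) = AlgHom.id K (R4 K) := by
  apply algHom_ext
  intro p
  rcases PairIdx.eq_pr_cases p with rfl | rfl | rfl | rfl | rfl | rfl <;>
    simp [xzHom, xzInv, xg, zg, pr] <;>
    conv_rhs => rw [← mul_one (X _), ← C_inv_two_mul_two h2]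
  all_goals ring

theorem xzInv_comp_xzHom (h2 : (2 : K) ≠ 0) :
    (xzInv K).comp (xzHom K) = AlgHom.id K (MvPolynomial (Fin 3 ⊕ Fin 3) K) := by
  apply algHom_ext
  rintro (j | j) <;> fin_cases j <;> simp [xzHom, xzInv, xg, zg, pr] <;>
    conv_rhs => rw [← mul_one (X _), ← C_inv_two_mul_two h2]
  all_goals ring

def xzEquiv (h2 : (2 : K) ≠ 0) : MvPolynomial (Fin 3 ⊕ Fin 3) K ≃ₐ[K] R4 K :=
  .ofAlgHom (xzHom K) (xzInv K) (xzHom_comp_xzInv h2) (xzInv_comp_xzHom h2)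

@[simp] theorem xzEquiv_apply (h2 : (2 : K) ≠ 0) (g : MvPolynomial (Fin 3 ⊕ Fin 3) K) :
    xzEquiv h2 g = xzHom K g :=
  rfl

def kleinElem : Fin 3 → Equiv.Perm (Fin 4) :=
  ![Equiv.swap 0 1 * Equiv.swap 2 3, Equiv.swap 0 2 * Equiv.swap 1 3,
    Equiv.swap 0 3 * Equiv.swap 1 2]

theorem kleinElem_mem (k : Fin 3) : kleinElem k ∈ klein := by
  fin_cases k <;> simp [kleinElem, klein]

theorem actS4_kleinElem_comp_xzHom (k : Fin 3) :
    (actS4 K (kleinElem k)).comp (xzHom K) =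
      (xzHom K).comp (flipSigns {inr (k + 1), inr (k + 2)}) := by
  apply algHom_ext
  rintro (i | i) <;> fin_cases k <;> fin_cases i <;>
    simp [kleinElem, xzHom, actS4, xg, zg, pairPerm_pr, Equiv.swap_apply_of_ne_of_ne,
      pr_comm 1 0, pr_comm 2 0, pr_comm 3 0, pr_comm 2 1, pr_comm 3 1, pr_comm 3 2] <;>
    ring

theorem flipSigns_xzEquiv_symm_of_mem_HInv (h2 : (2 : K) ≠ 0) {f : R4 K} (hf : f ∈ HInv K)
    (k : Fin 3) :
    flipSigns {inr (k + 1), inr (k + 2)} ((xzEquiv h2).symm f) = (xzEquiv h2).symm f := by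
  have hfix : actS4 K (kleinElem k) f = f := by
    have hmem := Algebra.mem_iInf.mp (Algebra.mem_iInf.mp hf (kleinElem k)) (kleinElem_mem k)
    exact (AlgHom.mem_equalizer _ _ _).mp hmem
  apply (xzEquiv h2).injective
  rw [xzEquiv_apply, ← AlgHom.comp_apply, ← actS4_kleinElem_comp_xzHom, AlgHom.comp_apply,
    ← xzEquiv_apply h2, AlgEquiv.apply_symm_apply, hfix]

theorem forall_even_or_forall_odd_of_mem_HInv (h2 : (2 : K) ≠ 0) {f : R4 K}
    (hf : f ∈ HInv K) : ∀ d ∈ ((xzEquiv h2).symm f).support,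
      (∀ j, Even (d (inr j))) ∨ ∀ j, Odd (d (inr j)) := by
  intro d hd
  refine Nat.forall_even_or_forall_odd_of_even_add fun i j hij => ?_
  obtain ⟨k, hk⟩ : ∃ k : Fin 3, (i = k + 1 ∧ j = k + 2) ∨ (i = k + 2 ∧ j = k + 1) := by
    revert i j; decide
  have heven := even_sum_of_flipSigns_eq h2 (flipSigns_xzEquiv_symm_of_mem_HInv h2 hf k) hd
  rw [Finset.sum_pair (by simp)] at heven
  rcases hk with ⟨rfl, rfl⟩ | ⟨rfl, rfl⟩
  · exact heven
  · rwa [add_comm]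

theorem adjoin_xg_zg_sq :
    Algebra.adjoin K {xg K 0, xg K 1, xg K 2, zg K 0 ^ 2, zg K 1 ^ 2, zg K 2 ^ 2} =
      (evenZSubalgebra K (Fin 3) (Fin 3)).map (xzHom K) := by
  rw [AlgHom.map_adjoin, ← Set.range_comp]
  congr 1
  ext a
  simp [xzHom, Sum.exists, Fin.exists_fin_succ, eq_comm, or_assoc]

theorem algebraicIndependent_xg_zg_sq (h2 : (2 : K) ≠ 0) :
    AlgebraicIndependent K ![xg K 0, xg K 1, xg K 2, zg K 0 ^ 2, zg K 1 ^ 2, zg K 2 ^ 2] := by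
  have h := ((algebraicIndependent_X_pow (R := K) (n := Sum.elim (fun _ => 1) (fun _ => 2))
    (by rintro (_ | _) <;> simp)).map' (xzEquiv h2).injective).comp
    ![inl 0, inl 1, inl 2, inr 0, inr 1, inr 2] (by decide)
  convert h using 1
  funext i
  fin_cases i <;> simp [xzHom]

theorem two_ne_zero_of_ringChar (hchar : ringChar K = 0 ∨ 3 < ringChar K) : (2 : K) ≠ 0 := by
  rw [Ne, ← Nat.cast_ofNat, ringChar.spec]
  rcases hchar with h | h
  · simp [h]
  · exact fun hdvd => absurd (Nat.le_of_dvd two_pos hdvd) (by omega)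

end Coordinates

/-- Let `K` be a field of characteristic `0` or `> 3`.  The six
elements `x₁, x₂, x₃, z₁², z₂², z₃²` of `R` are algebraically independent over `K`,
and `R^H` is a free module of rank two over the subalgebra
`P = K[x₁, x₂, x₃, z₁², z₂², z₃²]` with basis `{1, z₁z₂z₃}`, i.e.
`R^H = P ⊕ P·z₁z₂z₃`: every element of `R^H` is `p + q·z₁z₂z₃` with `p, q ∈ P`, and
such a representation is unique. -/
theorem HInv_free_rank_two
    (hchar : ringChar K = 0 ∨ 3 < ringChar K) :
    AlgebraicIndependent K
      ![xg K 0, xg K 1, xg K 2, zg K 0 ^ 2, zg K 1 ^ 2, zg K 2 ^ 2]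
    ∧ (∀ f ∈ HInv K,
        ∃ p ∈ Algebra.adjoin K
            {xg K 0, xg K 1, xg K 2, zg K 0 ^ 2, zg K 1 ^ 2, zg K 2 ^ 2},
          ∃ q ∈ Algebra.adjoin K
              {xg K 0, xg K 1, xg K 2, zg K 0 ^ 2, zg K 1 ^ 2, zg K 2 ^ 2},
            f = p + q * (zg K 0 * zg K 1 * zg K 2))
    ∧ (∀ p ∈ Algebra.adjoin K
          {xg K 0, xg K 1, xg K 2, zg K 0 ^ 2, zg K 1 ^ 2, zg K 2 ^ 2},
        ∀ q ∈ Algebra.adjoin K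
            {xg K 0, xg K 1, xg K 2, zg K 0 ^ 2, zg K 1 ^ 2, zg K 2 ^ 2},
          p + q * (zg K 0 * zg K 1 * zg K 2) = 0 → p = 0 ∧ q = 0) := by
  have h2 := two_ne_zero_of_ringChar hchar
  have hw : zg K 0 * zg K 1 * zg K 2 = xzHom K (∏ j, X (Sum.inr j)) := by
    simp [Fin.prod_univ_three, xzHom]
  simp only [adjoin_xg_zg_sq, hw, Subalgebra.mem_map, forall_exists_index, and_imp,
    exists_exists_and_eq_and, forall_apply_eq_imp_iff₂]
  refine ⟨algebraicIndependent_xg_zg_sq h2, fun f hf => ?_, fun p hp q hq h => ?_⟩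
  · obtain ⟨p, hp, q, hq, hpq⟩ :=
      exists_eq_add_mul_prod_X_inr (forall_even_or_forall_odd_of_mem_HInv h2 hf)
    refine ⟨p, hp, q, hq, ?_⟩
    rw [← map_mul, ← map_add, ← hpq, ← xzEquiv_apply h2, AlgEquiv.apply_symm_apply]
  · rw [← map_mul, ← map_add, ← map_zero (xzHom K)] at h
    have := eq_zero_of_add_mul_prod_X_inr_eq_zero hp hq ((xzEquiv h2).injective h)
    simp [this]
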